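/- (Orthogonal projection formulation) Let E be a finite-dimensional real inner product space, k ≥ 1, and w₁,…,w_k, u ∈ E. Let P denote the orthogonal projection of E onto the orthogonal complement of span{w₁,…,w_k}. Then v₀(w₁,…,w_k,u) = det(Σ^{(w₁,…,w_k)}_{(w₁,…,w_k)}) · P(u). -/

import Mathlib

open scoped RealInnerProductSpace BigOperators

/-- `Σ^{(a₁,…,a_r)}_{(b₁,…,b_s)}`: the `r × s` real matrix whose `(i,j)` entry is `⟪b j, a i⟫`. -/
noncomputable def sigmaMat {E : Type*} [NormedAddCommGroup E] [InnerProductSpace ℝ E]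
    {r s : ℕ} (a : Fin r → E) (b : Fin s → E) : Matrix (Fin r) (Fin s) ℝ :=
  Matrix.of fun i j => ⟪b j, a i⟫

/-- The standard control vector `v₀(w₁,…,w_{k+1},u)`: there are `k+1` vectors `w`
(`k+1 ≥ 1` encodes the requirement that the number of `w`-vectors is at least one).
With `0`-indexing, the sign `(-1)^(i+k+1)` below is the paper's `(-1)^{i+k+1}` for
`1`-indexed `i` and `k+1` vectors. -/
noncomputable def stdControl {E : Type*} [NormedAddCommGroup E] [InnerProductSpace ℝ E]
    {k : ℕ} (w : Fin (k + 1) → E) (u : E) : E :=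
  (∑ i : Fin (k + 1),
      ((-1 : ℝ) ^ ((i : ℕ) + k + 1) *
        (sigmaMat w (Fin.snoc (w ∘ i.succAbove) u)).det) • w i) +
    (sigmaMat w w).det • u

/-! `v₀(w, u)` is the vector representing the linear form `x ↦ det Σ^{(w, x)}_{(w, u)}`:
expanding this bordered Gram determinant along its last row gives `⟪x, v₀⟫`. For `x = wₘ` the
determinant has two equal rows, so `v₀ ⊥ span w`; and `v₀ - det Σ^{w}_{w} • u ∈ span w`.
Hence `v₀` is the orthogonal projection of `det Σ^{w}_{w} • u` onto `(span w)ᗮ`. -/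

theorem Fin.snoc_comp_castSucc_succAbove {α : Type*} {n : ℕ} (f : Fin (n + 1) → α) (x : α)
    (j : Fin (n + 1)) :
    (Fin.snoc f x : Fin (n + 2) → α) ∘ j.castSucc.succAbove = Fin.snoc (f ∘ j.succAbove) x := by
  funext l
  induction l using Fin.lastCases with
  | last => simp [Fin.succAbove_castSucc_of_le j _ (Fin.le_last j)]
  | cast l => simp [Fin.castSucc_succAbove_castSucc]

theorem Submodule.mem_orthogonal_span_range_iff {𝕜 E ι : Type*} [RCLike 𝕜]
    [NormedAddCommGroup E] [InnerProductSpace 𝕜 E] (w : ι → E) (v : E) :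
    v ∈ (Submodule.span 𝕜 (Set.range w))ᗮ ↔ ∀ i, inner 𝕜 v (w i) = 0 := by
  rw [← Submodule.span_singleton_le_iff_mem, ← Submodule.isOrtho_iff_le, Submodule.isOrtho_comm,
    Submodule.isOrtho_iff_le, Submodule.span_le, Set.range_subset_iff]
  simp only [SetLike.mem_coe, Submodule.mem_orthogonal_singleton_iff_inner_left, inner_eq_zero_symm]

section

variable {E : Type*} [NormedAddCommGroup E] [InnerProductSpace ℝ E]

@[simp]
theorem sigmaMat_apply {r s : ℕ} (a : Fin r → E) (b : Fin s → E) (i : Fin r) (j : Fin s) :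
    sigmaMat a b i j = ⟪b j, a i⟫ :=
  rfl

theorem sigmaMat_submatrix {r s r' s' : ℕ} (a : Fin r → E) (b : Fin s → E) (f : Fin r' → Fin r)
    (g : Fin s' → Fin s) : (sigmaMat a b).submatrix f g = sigmaMat (a ∘ f) (b ∘ g) :=
  rfl

theorem inner_stdControl {k : ℕ} (w : Fin (k + 1) → E) (u x : E) :
    ⟪x, stdControl w u⟫ = (sigmaMat (Fin.snoc w x) (Fin.snoc w u)).det := by
  rw [Matrix.det_succ_row _ (Fin.last _), Fin.sum_univ_castSucc, stdControl, inner_add_right,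
    inner_sum]
  simp only [sigmaMat_submatrix, Fin.succAbove_last, Fin.snoc_comp_castSucc,
    Fin.snoc_comp_castSucc_succAbove, real_inner_smul_right, Fin.val_last, Fin.val_castSucc]
  simp only [sigmaMat_apply, Fin.snoc_last, Fin.snoc_castSucc, ← two_mul, pow_mul]
  congr 1
  · refine Finset.sum_congr rfl fun i _ => ?_
    rw [real_inner_comm, add_comm (k + 1), ← add_assoc]
    ring
  · norm_num [real_inner_comm, mul_comm]

theorem stdControl_mem_orthogonal {k : ℕ} (w : Fin (k + 1) → E) (u : E) :
    stdControl w u ∈ (Submodule.span ℝ (Set.range w))ᗮ := by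
  refine (Submodule.mem_orthogonal_span_range_iff w _).2 fun m => ?_
  rw [real_inner_comm, inner_stdControl]
  exact Matrix.det_zero_of_row_eq (Fin.castSucc_lt_last m).ne <| by
    ext j
    simp

theorem stdControl_sub_smul_mem_span {k : ℕ} (w : Fin (k + 1) → E) (u : E) :
    stdControl w u - (sigmaMat w w).det • u ∈ Submodule.span ℝ (Set.range w) := by
  rw [stdControl, add_sub_cancel_right]
  exact Submodule.sum_mem _ fun i _ =>
    Submodule.smul_mem _ _ (Submodule.subset_span (Set.mem_range_self i))

end

/-- orthogonal projection formulation: `v₀(w,u)` equals the Gram determinant of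
the `w`'\''s times the orthogonal projection of `u` onto the orthogonal complement of
`span{w₁,…,w_{k+1}}`. -/
theorem stdControl_eq_gramDet_smul_orthogonalProjection
    {E : Type*} [NormedAddCommGroup E] [InnerProductSpace ℝ E] [FiniteDimensional ℝ E]
    {k : ℕ} (w : Fin (k + 1) → E) (u : E) :
    stdControl w u =
      (sigmaMat w w).det •
        ((Submodule.orthogonalProjectionOnto (Submodule.span ℝ (Set.range w))ᗮ u : E)) := by
  set V := Submodule.span ℝ (Set.range w)
  have hproj : Vᗮ.starProjection ((sigmaMat w w).det • u) = stdControl w u := by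
    refine Submodule.eq_starProjection_of_mem_orthogonal (stdControl_mem_orthogonal w u) ?_
    rw [← neg_sub]
    exact Submodule.neg_mem _ (V.le_orthogonal_orthogonal (stdControl_sub_smul_mem_span w u))
  rw [← hproj, map_smul]
  rfl
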